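/- Let G be a finitely generated powerful pro-p group with torsion subgroup T, and let U be a uniformly powerful open normal subgroup of G with U ⊆ C_G(T) and U ⊆ Φ(G). Then there exists k ∈ ℕ such that every element x of G with x^p ∈ U^{p^k} lies in N = U × T; that is, Ω₁(G/U^{p^k}) = Ω₁(N/U^{p^k}). -/

import Mathlib

open scoped Pointwise

/-- Minimal number of topological generators of a topological group, as an extended natural. -/
noncomputable def ngen (G : Type*) [Group G] [TopologicalSpace G] [IsTopologicalGroup G] : ℕ∞ :=
  sInf {n : ℕ∞ | ∃ S : Finset G, (S.card : ℕ∞) = n ∧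
    (Subgroup.closure (S : Set G)).topologicalClosure = ⊤}

/-- `d(H)`: minimal number of topological generators of a subgroup. -/
noncomputable def dsub {G : Type*} [Group G] [TopologicalSpace G] [IsTopologicalGroup G] (H : Subgroup G) : ℕ∞ :=
  ngen H

/-- The Prüfer rank of a topological group: `sup { d(H) | H open subgroup }`. -/
noncomputable def prank (G : Type*) [Group G] [TopologicalSpace G] [IsTopologicalGroup G] : ℕ∞ :=
  ⨆ H ∈ {H : Subgroup G | IsOpen (H : Set G)}, dsub H

/-- A topological group is pro-`p` if all its quotients by open normal subgroups are `p`-groups. -/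
def IsProP (p : ℕ) (G : Type*) [Group G] [TopologicalSpace G] : Prop :=
  ∀ (N : Subgroup G) [N.Normal], IsOpen (N : Set G) → IsPGroup p (G ⧸ N)

/-- A topological group is pronilpotent if all its quotients by open normal subgroups
are nilpotent. -/
def Pronilpotent (G : Type*) [Group G] [TopologicalSpace G] : Prop :=
  ∀ (N : Subgroup G) [N.Normal], IsOpen (N : Set G) → Group.IsNilpotent (G ⧸ N)

/-- `rk_p(G)`: the rank of a Sylow pro-`p` subgroup, i.e. the supremum of `d(K)`
over closed pro-`p` subgroups `K`. -/
noncomputable def rkP (G : Type*) [Group G] [TopologicalSpace G] [IsTopologicalGroup G] (p : ℕ) : ℕ∞ :=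
  ⨆ K ∈ {K : Subgroup G | IsClosed (K : Set G) ∧ IsProP p K}, dsub K

/-- The topological Frattini subgroup: intersection of all maximal open subgroups. -/
def frattiniTop (G : Type*) [Group G] [TopologicalSpace G] : Subgroup G :=
  ⨅ M ∈ {M : Subgroup G | IsOpen (M : Set G) ∧ IsCoatom M}, M

/-- One step of the iterated Frattini series, as an operation on subgroups. -/
def frattiniStep {G : Type*} [Group G] [TopologicalSpace G] (H : Subgroup G) : Subgroup G :=
  (frattiniTop H).map H.subtype

/-- A pro-`p` group is powerful if `[P,P]` is contained in the closed subgroup generated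
by `p`-th powers (`4`-th powers for `p = 2`). -/
def IsPowerful (p : ℕ) (P : Type*) [Group P] [TopologicalSpace P] [IsTopologicalGroup P] : Prop :=
  ⁅(⊤ : Subgroup P), (⊤ : Subgroup P)⁆ ≤
    (Subgroup.closure {x : P | ∃ g : P, g ^ (if p = 2 then 4 else p) = x}).topologicalClosure

/-! The sets `F k = {x | x ^ p ∈ U^{p^k}}` are closed and decreasing in the compact group `G`.
Their intersection consists of elements with `x ^ p = 1`, because the `U^{p^k}` shrink to the
identity in a pro-`p` group, so it lies in `T ⊆ U ⊔ T`. As `U ⊔ T` is open, compactness puts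
some `F k` inside it. -/

section closedPowSubgroup

variable {G : Type*} [Group G] [TopologicalSpace G] [IsTopologicalGroup G]

/-- The subgroup written `U^n` in the paper. -/
def closedPowSubgroup (U : Subgroup G) (n : ℕ) : Subgroup G :=
  (Subgroup.closure {y : G | ∃ u ∈ U, u ^ n = y}).topologicalClosure

theorem closedPowSubgroup_le {U H : Subgroup G} {n : ℕ} (hH : IsClosed (H : Set G))
    (h : ∀ u ∈ U, u ^ n ∈ H) : closedPowSubgroup U n ≤ H := by
  refine Subgroup.topologicalClosure_minimal _ ((Subgroup.closure_le _).mpr ?_) hH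
  rintro _ ⟨u, hu, rfl⟩
  exact h u hu

theorem closedPowSubgroup_anti (U : Subgroup G) {m n : ℕ} (hmn : m ∣ n) :
    closedPowSubgroup U n ≤ closedPowSubgroup U m := by
  obtain ⟨c, rfl⟩ := hmn
  refine closedPowSubgroup_le (Subgroup.isClosed_topologicalClosure _) fun u hu => ?_
  rw [mul_comm, pow_mul]
  exact Subgroup.le_topologicalClosure _ (Subgroup.subset_closure ⟨u ^ c, U.pow_mem hu c, rfl⟩)

theorem IsProP.exists_pow_prime_pow_mem [CompactSpace G] {p : ℕ} [Fact p.Prime]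
    (hG : IsProP p G) {H : Subgroup G} [H.Normal] (hH : IsOpen (H : Set G)) :
    ∃ n : ℕ, ∀ g : G, g ^ p ^ n ∈ H := by
  have : Finite (G ⧸ H) := Subgroup.quotient_finite_of_isOpen H hH
  obtain ⟨n, hn⟩ := IsPGroup.iff_card.mp (hG H hH)
  refine ⟨n, fun g => ?_⟩
  rw [← QuotientGroup.eq_one_iff, QuotientGroup.mk_pow, ← hn]
  exact pow_card_eq_one'

theorem IsProP.eq_one_of_forall_mem_closedPowSubgroup [CompactSpace G]
    [TotallyDisconnectedSpace G] {p : ℕ} [Fact p.Prime] (hG : IsProP p G) (U : Subgroup G)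
    {x : G} (hx : ∀ k, x ∈ closedPowSubgroup U (p ^ k)) : x = 1 := by
  by_contra hx1
  obtain ⟨H, hHx⟩ := ProfiniteGrp.exist_openNormalSubgroup_sub_open_nhds_of_one
    isOpen_compl_singleton (Ne.symm hx1 : (1 : G) ≠ x)
  obtain ⟨n, hn⟩ := hG.exists_pow_prime_pow_mem H.isOpen
  exact hHx (closedPowSubgroup_le H.isClosed (fun u _ => hn u) (hx n)) rfl

end closedPowSubgroup

theorem exists_pow_level_omega_in_torsion_product_general
    (p : ℕ) (hp : p.Prime)
    (G : Type*) [Group G] [TopologicalSpace G] [IsTopologicalGroup G]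
    [CompactSpace G] [TotallyDisconnectedSpace G]
    (hG : IsProP p G)
    (T : Subgroup G) (hT : (T : Set G) = {g : G | IsOfFinOrder g})
    (U : Subgroup G) (hUopen : IsOpen (U : Set G)) :
    ∃ k : ℕ, ∀ x : G,
      x ^ p ∈ (Subgroup.closure {y : G | ∃ u ∈ U, u ^ (p ^ k) = y}).topologicalClosure →
      x ∈ U ⊔ T := by
  have : Fact p.Prime := ⟨hp⟩
  let F : ℕ → Set G := fun k => (· ^ p) ⁻¹' closedPowSubgroup U (p ^ k)
  have hF_anti : Antitone F := fun k l hkl _ hx =>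
    closedPowSubgroup_anti U (pow_dvd_pow p hkl) hx
  have hF_closed : ∀ k, IsClosed (F k) := fun k =>
    (Subgroup.isClosed_topologicalClosure _).preimage (continuous_pow p)
  have hN_open : IsOpen ((U ⊔ T : Subgroup G) : Set G) := Subgroup.isOpen_mono le_sup_left hUopen
  have hF_iInter : ∀ x ∈ ⋂ k, F k, x ∈ U ⊔ T := fun x hx => by
    have hxp : x ^ p = 1 :=
      hG.eq_one_of_forall_mem_closedPowSubgroup U fun k => Set.mem_iInter.mp hx k
    have hxT : x ∈ (T : Set G) := hT ▸ isOfFinOrder_iff_pow_eq_one.mpr ⟨p, hp.pos, hxp⟩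
    exact Subgroup.mem_sup_right hxT
  obtain ⟨k, hk⟩ := exists_subset_nhds_of_compactSpace hF_anti.directed_ge hF_closed
    fun x hx => hN_open.mem_nhds (hF_iInter x hx)
  exact ⟨k, fun x hx => hk hx⟩

/-- For a finitely generated powerful pro-`p` group `G` with torsion subgroup
`T` and a uniformly powerful open normal subgroup `U ≤ C_G(T) ∩ Φ(G)`, there is `k ∈ ℕ` such
that every `x ∈ G` with `x^p ∈ U^{p^k}` lies in `N = U ⬝ T`; equivalently
`Ω₁(G/U^{p^k}) = Ω₁(N/U^{p^k})`. -/
theorem exists_pow_level_omega_in_torsion_product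
    (p : ℕ) (hp : p.Prime)
    (G : Type*) [Group G] [TopologicalSpace G] [IsTopologicalGroup G]
    [CompactSpace G] [T2Space G] [TotallyDisconnectedSpace G]
    (hG : IsProP p G) (hfg : ngen G ≠ ⊤) (hpow : IsPowerful p G)
    (T : Subgroup G) (hT : (T : Set G) = {g : G | IsOfFinOrder g})
    (U : Subgroup G) [U.Normal] (hUopen : IsOpen (U : Set G))
    (hUpow : IsPowerful p U) (hUtf : ∀ x : U, IsOfFinOrder x → x = 1)
    (hUC : U ≤ Subgroup.centralizer (T : Set G)) (hUPhi : U ≤ frattiniTop G) :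
    ∃ k : ℕ, ∀ x : G,
      x ^ p ∈ (Subgroup.closure {y : G | ∃ u ∈ U, u ^ (p ^ k) = y}).topologicalClosure →
      x ∈ U ⊔ T :=
  exists_pow_level_omega_in_torsion_product_general p hp G hG T hT U hUopen
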